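/- arXiv:2308.16384 — 3 statements merged into one kernel-verified Lean document; each statement's English description precedes it below -/
import Mathlib

section
/- Let p be a prime, Λ = Z_p[[T]], γ = 1+T, and Λ_n = Λ/(γ^{p^n}-1) ≅ Z_p[X]/((1+X)^{p^n}-1). For n ≤ m, define h : Λ_n² → Λ_m² by h(x) = (∏_{n+1≤k≤m} φ_{p^k}(γ))·x', where x' is any lift of x under the canonical projection Λ_m² → Λ_n². Then h is well-defined (independent of the lift), injective, and its cokernel is a free Z_p-module; consequently the induced map h* : Hom_{Z_p}(Λ_m², Z/p^j Z) → Hom_{Z_p}(Λ_n², Z/p^j Z) is surjective for every positive integer j. -/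
open Polynomial

noncomputable def levelIdeal (p : ℕ) [Fact p.Prime] (n : ℕ) : Ideal (Polynomial ℤ_[p]) :=
  Ideal.span {((1 + Polynomial.X : Polynomial ℤ_[p]) ^ (p ^ n) - 1)}

/-- `Λ_n = ℤ_p[X]/((1+X)^{p^n} - 1)`. -/
noncomputable abbrev IwasawaLevel (p : ℕ) [Fact p.Prime] (n : ℕ) : Type :=
  Polynomial ℤ_[p] ⧸ levelIdeal p n

/-- Projection `ℤ_p[X]² → Λ_n²`. -/
noncomputable def proj (p : ℕ) [Fact p.Prime] (n : ℕ)
    (x : Polynomial ℤ_[p] × Polynomial ℤ_[p]) : IwasawaLevel p n × IwasawaLevel p n :=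
  (Ideal.Quotient.mk (levelIdeal p n) x.1, Ideal.Quotient.mk (levelIdeal p n) x.2)

/-- The element `∏_{n+1 ≤ k ≤ m} φ_{p^k}(γ)` of `Λ_m`, with `γ = 1 + X`. -/
noncomputable def cofactor (p : ℕ) [Fact p.Prime] (n m : ℕ) : IwasawaLevel p m :=
  Ideal.Quotient.mk (levelIdeal p m)
    (∏ k ∈ Finset.Icc (n + 1) m,
      (Polynomial.cyclotomic (p ^ k) ℤ_[p]).comp (Polynomial.X + 1))

noncomputable def zmodModule (p : ℕ) [Fact p.Prime] (j : ℕ) :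
    Module ℤ_[p] (ZMod (p ^ j)) :=
  (PadicInt.toZModPow j).toModule

/-! With `a = (1+X)^{p^n} - 1` and the cofactor `c = ∏_{n<k≤m} φ_{p^k}(1+X)` one has
`a·c = (1+X)^{p^m} - 1`, so multiplication by `c` maps `Λ_n = R/(a)` into `Λ_m = R/(ac)`
(`R = ℤ_p[X]`), with cokernel `R/(c)`. As `c` is monic it is a non-zero-divisor, which gives
injectivity, and `R/(c)` is `ℤ_p`-free of rank `deg c`. A short exact sequence with projective
cokernel splits, so every homomorphism out of `Λ_n²` extends along `h`. -/

section QuotSpanMulLeft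

variable {R : Type*} [CommRing R] {a c b : R}

noncomputable def quotSpanMulLeft (hb : a * c = b) :
    (R ⧸ Ideal.span {a}) →ₗ[R] R ⧸ Ideal.span {b} :=
  Submodule.mapQ _ _ (LinearMap.mulLeft R c) fun x hx => by
    obtain ⟨q, rfl⟩ := Ideal.mem_span_singleton.mp hx
    exact Ideal.mem_span_singleton.mpr ⟨q, by rw [← hb, LinearMap.mulLeft_apply]; ring⟩

lemma quotSpanMulLeft_mk (hb : a * c = b) (x : R) :
    quotSpanMulLeft hb (Ideal.Quotient.mk _ x) = Ideal.Quotient.mk _ (c * x) :=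
  rfl

lemma quotSpanMulLeft_injective (hb : a * c = b) (hc : IsLeftRegular c) :
    Function.Injective (quotSpanMulLeft hb) := by
  refine (injective_iff_map_eq_zero _).mpr fun x hx => ?_
  obtain ⟨x, rfl⟩ := Ideal.Quotient.mk_surjective x
  rw [quotSpanMulLeft_mk, Ideal.Quotient.eq_zero_iff_mem, Ideal.mem_span_singleton] at hx
  obtain ⟨q, hq⟩ := hx
  rw [Ideal.Quotient.eq_zero_iff_mem, Ideal.mem_span_singleton]
  exact ⟨q, hc (show c * x = c * (a * q) by rw [hq, ← hb]; ring)⟩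

lemma Ideal.span_singleton_le_span_singleton_of_mul_eq (hb : a * c = b) :
    Ideal.span {b} ≤ Ideal.span {c} :=
  Ideal.span_singleton_le_span_singleton.mpr ⟨a, by rw [← hb, mul_comm]⟩

lemma exact_quotSpanMulLeft_factor (hb : a * c = b) :
    Function.Exact (quotSpanMulLeft hb)
      (Submodule.factor (Ideal.span_singleton_le_span_singleton_of_mul_eq hb)) := by
  intro y
  constructor
  · intro hy
    obtain ⟨y, rfl⟩ := Ideal.Quotient.mk_surjective y
    obtain ⟨q, rfl⟩ := Ideal.mem_span_singleton.mp (Ideal.Quotient.eq_zero_iff_mem.mp hy)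
    exact ⟨Ideal.Quotient.mk _ q, rfl⟩
  · rintro ⟨z, rfl⟩
    obtain ⟨z, rfl⟩ := Ideal.Quotient.mk_surjective z
    exact Ideal.Quotient.eq_zero_iff_mem.mpr (Ideal.mem_span_singleton.mpr (dvd_mul_right c z))

end QuotSpanMulLeft

lemma LinearMap.exact_prodMap {R M N P M' N' P' : Type*} [Semiring R]
    [AddCommMonoid M] [AddCommMonoid N] [AddCommMonoid P] [AddCommMonoid M']
    [AddCommMonoid N'] [AddCommMonoid P'] [Module R M] [Module R N] [Module R P]
    [Module R M'] [Module R N'] [Module R P'] {f : M →ₗ[R] N} {g : N →ₗ[R] P}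
    {f' : M' →ₗ[R] N'} {g' : N' →ₗ[R] P'}
    (h : Function.Exact f g) (h' : Function.Exact f' g') :
    Function.Exact (f.prodMap f') (g.prodMap g') := by
  rintro ⟨y, y'⟩
  simp [Prod.ext_iff, h y, h' y']

lemma Function.Exact.surjective_comp_right_of_projective {R M N P : Type*} [Ring R]
    [AddCommGroup M] [AddCommGroup N] [AddCommGroup P] [Module R M] [Module R N] [Module R P]
    [Module.Projective R P] {f : M →ₗ[R] N} {g : N →ₗ[R] P} (h : Function.Exact f g)
    (hf : Function.Injective f) (hg : Function.Surjective g)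
    (Q : Type*) [AddCommMonoid Q] [Module R Q] :
    Function.Surjective fun φ : N →ₗ[R] Q => φ ∘ₗ f := by
  obtain ⟨s, hs⟩ := Module.projective_lifting_property g LinearMap.id hg
  obtain ⟨l, hl⟩ :=
    ((h.split_tfae hf hg).out 0 1).mp (⟨s, hs⟩ : ∃ s, g ∘ₗ s = LinearMap.id)
  refine fun ψ => ⟨ψ ∘ₗ l, ?_⟩
  show (ψ ∘ₗ l) ∘ₗ f = ψ
  rw [LinearMap.comp_assoc, hl, LinearMap.comp_id]

section Cyclotomic

variable (R : Type*) [CommRing R] (p : ℕ)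

lemma X_pow_sub_one_mul_prod_cyclotomic [Fact p.Prime] {n m : ℕ} (hnm : n ≤ m) :
    (X ^ p ^ n - 1) * ∏ k ∈ Finset.Icc (n + 1) m, cyclotomic (p ^ k) R = X ^ p ^ m - 1 := by
  induction m, hnm using Nat.le_induction with
  | base => simp
  | succ m hnm ih =>
    rw [Finset.prod_Icc_succ_top (by omega), ← mul_assoc, ih, mul_comm,
      cyclotomic_prime_pow_mul_X_pow_sub_one]

noncomputable def cofactorPoly (n m : ℕ) : R[X] :=
  ∏ k ∈ Finset.Icc (n + 1) m, (cyclotomic (p ^ k) R).comp (X + 1)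

lemma one_add_X_pow_sub_one_mul_cofactorPoly [Fact p.Prime] {n m : ℕ} (hnm : n ≤ m) :
    ((1 + X : R[X]) ^ p ^ n - 1) * cofactorPoly R p n m = (1 + X) ^ p ^ m - 1 := by
  rw [cofactorPoly, add_comm 1 X]
  simpa only [mul_comp, sub_comp, pow_comp, X_comp, one_comp, prod_comp] using
    congrArg (fun q : R[X] => q.comp (X + 1)) (X_pow_sub_one_mul_prod_cyclotomic R p hnm)

lemma cofactorPoly_monic [Nontrivial R] (n m : ℕ) : (cofactorPoly R p n m).Monic :=
  monic_prod_of_monic _ _ fun _ _ =>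
    (cyclotomic.monic _ R).comp (monic_X_add_C 1)
      (by rw [← C_1, natDegree_X_add_C]; exact one_ne_zero)

end Cyclotomic

/-- for `n ≤ m` there is a well-defined map `h : Λ_n² → Λ_m²` sending the
class of `x'` to `∏_{n+1 ≤ k ≤ m} φ_{p^k}(γ) · x'` for any lift `x'`; it is injective
with cokernel a free `ℤ_p`-module, and the induced map
`h* : Hom_{ℤ_p}(Λ_m², ℤ/p^j) → Hom_{ℤ_p}(Λ_n², ℤ/p^j)` is surjective for all `j ≥ 1`. -/
theorem corestriction_map_exists (p : ℕ) [Fact p.Prime] (n m : ℕ) (hnm : n ≤ m) :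
    ∃ h : (IwasawaLevel p n × IwasawaLevel p n) →ₗ[ℤ_[p]]
        (IwasawaLevel p m × IwasawaLevel p m),
      -- well-definedness: the value on a class is `cofactor • (any lift)`
      (∀ x' : Polynomial ℤ_[p] × Polynomial ℤ_[p],
        h (proj p n x') = cofactor p n m • proj p m x') ∧
      -- injectivity
      Function.Injective h ∧
      -- the cokernel is a free `ℤ_p`-module
      Module.Free ℤ_[p]
        ((IwasawaLevel p m × IwasawaLevel p m) ⧸ LinearMap.range h) ∧
      -- surjectivity of the induced map on `Hom_{ℤ_p}(-, ℤ/p^j)` for all `j ≥ 1`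
      (∀ j : ℕ, 1 ≤ j →
        letI : Module ℤ_[p] (ZMod (p ^ j)) := zmodModule p j
        Function.Surjective
          (fun f : (IwasawaLevel p m × IwasawaLevel p m) →ₗ[ℤ_[p]] ZMod (p ^ j) =>
            f ∘ₗ h)) := by
  have hmul := one_add_X_pow_sub_one_mul_cofactorPoly ℤ_[p] p hnm
  have hmonic := cofactorPoly_monic ℤ_[p] p n m
  have := hmonic.free_quotient
  let h₁ := quotSpanMulLeft hmul
  have hle := Ideal.span_singleton_le_span_singleton_of_mul_eq hmul
  let g₁ := Submodule.factor hle
  have hinj₁ : Function.Injective h₁ := quotSpanMulLeft_injective hmul hmonic.isRegular.left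
  let h := (h₁.prodMap h₁).restrictScalars ℤ_[p]
  let g := (g₁.prodMap g₁).restrictScalars ℤ_[p]
  have hexact : Function.Exact h g :=
    LinearMap.exact_prodMap (exact_quotSpanMulLeft_factor hmul)
      (exact_quotSpanMulLeft_factor hmul)
  have hinj : Function.Injective h := Prod.map_injective.mpr ⟨hinj₁, hinj₁⟩
  have hsurj : Function.Surjective g :=
    Prod.map_surjective.mpr ⟨Submodule.factor_surjective hle, Submodule.factor_surjective hle⟩
  refine ⟨h, fun x' => rfl, hinj, .of_equiv (hexact.linearEquivOfSurjective hsurj).symm,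
    fun j _ => ?_⟩
  let _ := zmodModule p j
  exact hexact.surjective_comp_right_of_projective hinj hsurj _
end

section
/- Let Λ_n = Z_p[X]/((1+X)^{p^n}-1) and let ω_n^+, ω_n^- be the coprime factorization of (1+X)^{p^n}-1 into plus and minus parts. Then the Z_p-module Λ_n/(ω_n^+ + ω_n^-) (the quotient by the ideal generated by both ω_n^+ and ω_n^-) is finite. -/
/-!
Since `ω⁺ ω⁻ = (1+X)^{p^n} - 1`, the ideal `(ω⁺, ω⁻)` contains the defining ideal of `Λ_n`, so the
quotient in question is `ℤ_p[X]/(ω⁺, ω⁻)`. Over `ℚ_p` the polynomial `(1+X)^{p^n} - 1` is separable,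
so its factors `ω⁺, ω⁻` are coprime there; clearing denominators in a Bézout relation puts a nonzero
constant `c` into `(ω⁺, ω⁻)`. Hence `ℤ_p[X]/(ω⁺, ω⁻)` is a quotient of `(ℤ_p/c)[X]/(ω⁺)`, which is
finite because `ℤ_p/c` is finite and `ω⁺` is monic.
-/

open Polynomial

noncomputable def omegaPlus (p : ℕ) [Fact p.Prime] (n : ℕ) : Polynomial ℤ_[p] :=
  ∏ k ∈ (Finset.Icc 1 n).filter (fun k => Even k),
    (Polynomial.cyclotomic (p ^ k) ℤ_[p]).comp (Polynomial.X + 1)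

noncomputable def omegaMinus (p : ℕ) [Fact p.Prime] (n : ℕ) : Polynomial ℤ_[p] :=
  ((Polynomial.X + 1) - 1) *
    ∏ k ∈ (Finset.Icc 1 n).filter (fun k => Odd k),
      (Polynomial.cyclotomic (p ^ k) ℤ_[p]).comp (Polynomial.X + 1)

theorem IsDiscreteValuationRing.finite_quotient_of_ne_bot {R : Type*} [CommRing R] [IsDomain R]
    [IsDiscreteValuationRing R] [TopologicalSpace R] [IsTopologicalRing R] [CompactSpace R]
    [T2Space R] {I : Ideal R} (hI : I ≠ ⊥) : Finite (R ⧸ I) :=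
  IsLocalRing.isOpen_iff_finite_quotient.mp (IsDiscreteValuationRing.isOpen_iff.mpr hI)

namespace Polynomial

theorem finite_quotient_of_monic_mem {R : Type*} [CommRing R] {K : Ideal R[X]} {f : R[X]}
    (hf : f.Monic) (hfK : f ∈ K) [Finite (R ⧸ K.under R)] : Finite (R[X] ⧸ K) := by
  have hfK' : Ideal.span {f} ≤ K := Ideal.span_singleton_le_iff_mem K |>.mpr hfK
  have : Module.Finite R (R[X] ⧸ Ideal.span {f}) := hf.finite_adjoinRoot
  have : Module.Finite R (R[X] ⧸ K) :=
    Module.Finite.of_surjective (Ideal.Quotient.factorₐ R hfK').toLinearMap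
      (Ideal.Quotient.factor_surjective hfK')
  have := Module.Finite.of_restrictScalars_finite R (R ⧸ K.under R) (R[X] ⧸ K)
  exact Module.finite_of_finite (R ⧸ K.under R)

theorem exists_C_mem_span_pair_of_isCoprime_map {R K : Type*} [CommRing R] [Field K]
    [Algebra R K] [IsFractionRing R K] {f g : R[X]}
    (h : IsCoprime (f.map (algebraMap R K)) (g.map (algebraMap R K))) :
    ∃ c ∈ nonZeroDivisors R, C c ∈ Ideal.span {f, g} := by
  obtain ⟨a, b, hab⟩ := h
  obtain ⟨s, hs, ha⟩ := IsLocalization.integerNormalization_spec (nonZeroDivisors R) a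
  obtain ⟨t, ht, hb⟩ := IsLocalization.integerNormalization_spec (nonZeroDivisors R) b
  refine ⟨s * t, mul_mem hs ht, Ideal.mem_span_pair.mpr
    ⟨C t * IsLocalization.integerNormalization (nonZeroDivisors R) a,
     C s * IsLocalization.integerNormalization (nonZeroDivisors R) b, ?_⟩⟩
  apply map_injective _ (IsFractionRing.injective R K)
  simp only [Polynomial.map_add, Polynomial.map_mul, map_C, ha, hb, Algebra.smul_def,
    Polynomial.algebraMap_apply, map_mul]
  linear_combination C (algebraMap R K s) * C (algebraMap R K t) * hab

theorem separable_one_add_X_pow_sub_one {K : Type*} [Field K] {N : ℕ} (hN : (N : K) ≠ 0) :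
    ((1 + X : K[X]) ^ N - 1).Separable := by
  obtain ⟨M, rfl⟩ := Nat.exists_eq_add_one_of_ne_zero (n := N) (by rintro rfl; simp at hN)
  refine ⟨-1, C (M + 1 : K)⁻¹ * (1 + X), ?_⟩
  have hinv : C (M + 1 : K)⁻¹ * C (M + 1 : K) = 1 := by
    rw [← C_mul, inv_mul_cancel₀ (by simpa using hN), C_1]
  simp only [derivative_sub, derivative_pow_succ, derivative_add, derivative_one, derivative_X]
  linear_combination (1 + X) * (1 + X) ^ M * hinv

theorem prod_range_cyclotomic_prime_pow (R : Type*) [CommRing R] {p : ℕ} (hp : p.Prime) (n : ℕ) :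
    ∏ k ∈ Finset.range (n + 1), cyclotomic (p ^ k) R = X ^ p ^ n - 1 := by
  rw [← prod_cyclotomic_eq_X_pow_sub_one (pow_pos hp.pos n), Nat.prod_divisors_prime_pow hp]

end Polynomial

section Omega

variable (p : ℕ) [Fact p.Prime] (n : ℕ)

theorem omegaPlus_monic : (omegaPlus p n).Monic :=
  monic_prod_of_monic _ _ fun k _ => by simpa using (cyclotomic.monic (p ^ k) ℤ_[p]).comp_X_add_C 1

theorem omegaPlus_mul_omegaMinus :
    omegaPlus p n * omegaMinus p n = (1 + X : ℤ_[p][X]) ^ p ^ n - 1 := by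
  have hsplit : ∏ k ∈ Finset.Icc 1 n, (cyclotomic (p ^ k) ℤ_[p]).comp (X + 1) =
      omegaPlus p n * ∏ k ∈ (Finset.Icc 1 n).filter (fun k => Odd k),
        (cyclotomic (p ^ k) ℤ_[p]).comp (X + 1) := by
    simp only [omegaPlus, ← Nat.not_even_iff_odd, Finset.prod_filter_mul_prod_filter_not]
  have hrange : Finset.range (n + 1) = insert 0 (Finset.Icc 1 n) := by
    ext k; simp only [Finset.mem_range, Finset.mem_insert, Finset.mem_Icc]; omega
  calc omegaPlus p n * omegaMinus p n
      = X * ∏ k ∈ Finset.Icc 1 n, (cyclotomic (p ^ k) ℤ_[p]).comp (X + 1) := by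
        rw [hsplit, omegaMinus]; ring
    _ = ∏ k ∈ Finset.range (n + 1), (cyclotomic (p ^ k) ℤ_[p]).comp (X + 1) := by
        simp [hrange]
    _ = (X ^ p ^ n - 1 : ℤ_[p][X]).comp (X + 1) := by
        rw [← prod_range_cyclotomic_prime_pow _ Fact.out, prod_comp]
    _ = (1 + X) ^ p ^ n - 1 := by simp [add_comm]

theorem isCoprime_map_omegaPlus_omegaMinus :
    IsCoprime ((omegaPlus p n).map (algebraMap ℤ_[p] ℚ_[p]))
      ((omegaMinus p n).map (algebraMap ℤ_[p] ℚ_[p])) := by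
  apply Separable.isCoprime
  rw [← Polynomial.map_mul, omegaPlus_mul_omegaMinus]
  simpa using separable_one_add_X_pow_sub_one (K := ℚ_[p]) (N := p ^ n)
    (by exact_mod_cast (pow_pos (Fact.out : p.Prime).pos n).ne')

theorem levelIdeal_le_span_omegas :
    levelIdeal p n ≤ Ideal.span {omegaPlus p n, omegaMinus p n} := by
  rw [levelIdeal, Ideal.span_singleton_le_iff_mem, ← omegaPlus_mul_omegaMinus]
  exact Ideal.mul_mem_right _ _ (Ideal.subset_span (Set.mem_insert _ _))

theorem finite_quotient_span_omegas :
    Finite (ℤ_[p][X] ⧸ Ideal.span {omegaPlus p n, omegaMinus p n}) := by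
  obtain ⟨c, hc, hcJ⟩ :=
    exists_C_mem_span_pair_of_isCoprime_map (isCoprime_map_omegaPlus_omegaMinus p n)
  have : Finite (ℤ_[p] ⧸ (Ideal.span {omegaPlus p n, omegaMinus p n}).under ℤ_[p]) :=
    IsDiscreteValuationRing.finite_quotient_of_ne_bot <|
      (Submodule.ne_bot_iff _).mpr ⟨c, hcJ, nonZeroDivisors.ne_zero hc⟩
  exact finite_quotient_of_monic_mem (omegaPlus_monic p n) (Ideal.subset_span (Set.mem_insert _ _))

end Omega

/-- the quotient `Λ_n/(ω_n^+, ω_n^-)` is finite. -/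
theorem quotient_by_both_omegas_finite (p : ℕ) [Fact p.Prime] (n : ℕ) :
    Finite (IwasawaLevel p n ⧸ Ideal.span
      {Ideal.Quotient.mk (levelIdeal p n) (omegaPlus p n),
       Ideal.Quotient.mk (levelIdeal p n) (omegaMinus p n)}) := by
  have := finite_quotient_span_omegas p n
  rw [← Set.image_pair, ← Ideal.map_span]
  exact .of_equiv _
    (DoubleQuot.quotQuotEquivQuotOfLE (levelIdeal_le_span_omegas p n)).symm.toEquiv
end

section
/- Let M be a cofree Λ_n-comodule, i.e., an abelian p-divisible group M with Λ_n-action whose Pontryagin dual is isomorphic to Λ_n² where Λ_n = Z_p[X]/((1+X)^{p^n}-1). Let ω^- , ω^+ be elements of Λ_n with ω^-·ω^+ = 0 in Λ_n and which are coprime in Q_p[X] (e.g. ω_n^±). Then M = M[ω^-] + M[ω^+], where M[f] denotes the kernel of multiplication by f on M. -/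
/-!
Since `ω⁻` and `ω⁺` are coprime over `ℚ_p`, clearing denominators gives `A ω⁻ + B ω⁺ = p ^ k`
in `Λ_n`. Writing `m = p ^ k • m'` by divisibility, `m = (B ω⁺) • m' + (A ω⁻) • m'`, and the two
summands are killed by `ω⁻` and `ω⁺` respectively because `ω⁻ ω⁺ = 0`.
-/

open Polynomial

/-- `ℚ_p/ℤ_p` as a `ℤ_p`-module. -/
noncomputable abbrev QZ (p : ℕ) [Fact p.Prime] : Type :=
  ℚ_[p] ⧸ LinearMap.range (Algebra.linearMap ℤ_[p] ℚ_[p])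

theorem Polynomial.exists_mul_add_mul_eq_C_of_isCoprime_map {R K : Type*} [CommRing R]
    [CommRing K] [Algebra R K] [IsFractionRing R K] {f g : R[X]}
    (h : IsCoprime (f.map (algebraMap R K)) (g.map (algebraMap R K))) :
    ∃ c ∈ nonZeroDivisors R, ∃ u v : R[X], u * f + v * g = C c := by
  obtain ⟨u, v, huv⟩ := h
  obtain ⟨a, ha, hu⟩ := IsLocalization.integerNormalization_spec (nonZeroDivisors R) u
  obtain ⟨b, hb, hv⟩ := IsLocalization.integerNormalization_spec (nonZeroDivisors R) v
  refine ⟨a * b, mul_mem ha hb, C b * IsLocalization.integerNormalization (nonZeroDivisors R) u,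
    C a * IsLocalization.integerNormalization (nonZeroDivisors R) v, ?_⟩
  apply map_injective _ (IsFractionRing.injective R K)
  simp only [Polynomial.map_add, Polynomial.map_mul, map_C, hu, hv,
    Algebra.smul_def, Polynomial.algebraMap_apply, map_mul]
  linear_combination C (algebraMap R K a) * C (algebraMap R K b) * huv

theorem PadicInt.exists_mul_add_mul_eq_C_pow_of_isCoprime_map {p : ℕ} [Fact p.Prime]
    {f g : ℤ_[p][X]}
    (h : IsCoprime (f.map (algebraMap ℤ_[p] ℚ_[p])) (g.map (algebraMap ℤ_[p] ℚ_[p]))) :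
    ∃ k : ℕ, ∃ u v : ℤ_[p][X], u * f + v * g = C ((p : ℤ_[p]) ^ k) := by
  obtain ⟨c, hc, u, v, huv⟩ := exists_mul_add_mul_eq_C_of_isCoprime_map (K := ℚ_[p]) h
  have hc0 : c ≠ 0 := nonZeroDivisors.ne_zero hc
  set w : ℤ_[p] := ↑(unitCoeff hc0)⁻¹
  refine ⟨c.valuation, C w * u, C w * v, ?_⟩
  rw [← Units.inv_mul_cancel_left (unitCoeff hc0) ((p : ℤ_[p]) ^ c.valuation),
    ← unitCoeff_spec hc0, map_mul, ← huv]
  ring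

theorem Module.exists_eq_add_of_mul_eq_zero {R M : Type*} [CommSemiring R] [AddCommMonoid M]
    [Module R M] {a b c u v : R} (hab : a * b = 0) (hc : u * a + v * b = c)
    (hsurj : Function.Surjective (c • · : M → M)) (m : M) :
    ∃ x y : M, a • x = 0 ∧ b • y = 0 ∧ m = x + y := by
  obtain ⟨m', rfl⟩ := hsurj m
  refine ⟨(v * b) • m', (u * a) • m', ?_, ?_, ?_⟩
  · rw [smul_smul, mul_left_comm, hab, mul_zero, zero_smul]
  · rw [smul_smul, mul_left_comm, mul_comm b, hab, mul_zero, zero_smul]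
  · rw [← add_smul, add_comm, hc]

theorem decomposition_into_plus_minus_kernels_general (p : ℕ) [Fact p.Prime] (n : ℕ)
    (M : Type) [AddCommGroup M] [Module (IwasawaLevel p n) M]
    -- `M` is `p`-divisible
    (hdiv : ∀ m : M, ∃ m' : M, p • m' = m)
    (ωm ωp : IwasawaLevel p n)
    -- `ω⁻ · ω⁺ = 0` in `Λ_n`
    (hzero : ωm * ωp = 0)
    -- `ω⁻` and `ω⁺` are coprime in `ℚ_p[X]`
    (hcop : ∃ wm wp : Polynomial ℤ_[p],
      Ideal.Quotient.mk (levelIdeal p n) wm = ωm ∧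
      Ideal.Quotient.mk (levelIdeal p n) wp = ωp ∧
      IsCoprime (wm.map (algebraMap ℤ_[p] ℚ_[p])) (wp.map (algebraMap ℤ_[p] ℚ_[p]))) :
    ∀ m : M, ∃ a b : M, ωm • a = 0 ∧ ωp • b = 0 ∧ m = a + b := by
  obtain ⟨wm, wp, rfl, rfl, hcop⟩ := hcop
  obtain ⟨k, u, v, huv⟩ := PadicInt.exists_mul_add_mul_eq_C_pow_of_isCoprime_map hcop
  have hdivk : Function.Surjective ((p ^ k : ℕ) • · : M → M) := by
    simpa only [smul_iterate] using Function.Surjective.iterate hdiv k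
  set mk := Ideal.Quotient.mk (levelIdeal p n)
  have hΛ : mk u * mk wm + mk v * mk wp = ((p ^ k : ℕ) : IwasawaLevel p n) := by
    simpa only [map_add, map_mul, map_pow, map_natCast, C_eq_natCast, Nat.cast_pow]
      using congrArg mk huv
  exact Module.exists_eq_add_of_mul_eq_zero hzero hΛ
    (by simpa only [Nat.cast_smul_eq_nsmul] using hdivk)

/-- if `M` is a `p`-divisible `Λ_n`-module whose Pontryagin dual is
isomorphic to `Λ_n²` as a `Λ_n`-module, and `ω⁻, ω⁺ ∈ Λ_n` satisfy `ω⁻·ω⁺ = 0` and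
are coprime in `ℚ_p[X]`, then `M = M[ω⁻] + M[ω⁺]`. -/
theorem decomposition_into_plus_minus_kernels (p : ℕ) [Fact p.Prime] (n : ℕ)
    (M : Type) [AddCommGroup M] [Module (IwasawaLevel p n) M]
    [Module ℤ_[p] M] [IsScalarTower ℤ_[p] (IwasawaLevel p n) M]
    -- `M` is `p`-divisible
    (hdiv : ∀ m : M, ∃ m' : M, p • m' = m)
    -- the Pontryagin dual of `M` is isomorphic to `Λ_n²` as a `Λ_n`-module
    (hdual : ∃ e : (M →ₗ[ℤ_[p]] QZ p) ≃ₗ[ℤ_[p]]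
        (IwasawaLevel p n × IwasawaLevel p n),
      ∀ (x : IwasawaLevel p n) (f : M →ₗ[ℤ_[p]] QZ p),
        e (f ∘ₗ ((LinearMap.lsmul (IwasawaLevel p n) M x).restrictScalars ℤ_[p])) =
          x • e f)
    (ωm ωp : IwasawaLevel p n)
    -- `ω⁻ · ω⁺ = 0` in `Λ_n`
    (hzero : ωm * ωp = 0)
    -- `ω⁻` and `ω⁺` are coprime in `ℚ_p[X]`
    (hcop : ∃ wm wp : Polynomial ℤ_[p],
      Ideal.Quotient.mk (levelIdeal p n) wm = ωm ∧
      Ideal.Quotient.mk (levelIdeal p n) wp = ωp ∧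
      IsCoprime (wm.map (algebraMap ℤ_[p] ℚ_[p])) (wp.map (algebraMap ℤ_[p] ℚ_[p]))) :
    ∀ m : M, ∃ a b : M, ωm • a = 0 ∧ ωp • b = 0 ∧ m = a + b :=
  decomposition_into_plus_minus_kernels_general p n M hdiv ωm ωp hzero hcop
end
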